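/- arXiv:2412.12655 — 2 statements merged into one kernel-verified Lean document; each statement's English description precedes it below -/
import Mathlib

section
/- With F(x) := −log(x)/√3 − (1/√3)·artanh(√3·cos(x)/√(4 − cos(x)²)), one has lim_{n→∞} ∫_0^{π/2} (1/(sin(x)·√(4 − cos(x)²)) − 1/(√3·x)) · sin(nx)² dx = (1/2)·(F(π/2) − lim_{x→0⁺} F(x)) = (1/(2√3))·log(2√3/π), where lim_{x→0⁺} F(x) = −log(√3)/√3 and F(π/2) = −log(π/2)/√3. -/
/-!
Since `sin² (n x) = (1 - cos (2 n x)) / 2`, the integral is half the integral of the integrand `f`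
minus half of `∫ f(x) cos (2 n x) dx`, and the latter tends to `0` by the Riemann–Lebesgue lemma:
`f` is integrable, as `|f x| ≤ x` on `(0, π / 2]`. The integral of `f` is `F(π/2) - F(0⁺)` by the
fundamental theorem of calculus. On `(0, π)` one has
`artanh (√3 cos x / √(4 - cos² x)) = log ((√(4 - cos² x) + √3 cos x) / (2 sin x))`, so that
`F x = -log ((√(4 - cos² x) + √3 cos x) / (2 sinc x)) / √3`, which is continuous at `0`.
-/

open Real Set Filter intervalIntegral

/-- The inverse hyperbolic tangent. -/
noncomputable def artanh (y : ℝ) : ℝ := (1 / 2) * Real.log ((1 + y) / (1 - y))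

/-- The antiderivative `F(x) = -log(x)/√3 - (1/√3)·artanh(√3·cos x/√(4 - cos²x))`. -/
noncomputable def triAntideriv (x : ℝ) : ℝ :=
  -Real.log x / Real.sqrt 3
    - (1 / Real.sqrt 3) * _root_.artanh (Real.sqrt 3 * Real.cos x / Real.sqrt (4 - Real.cos x ^ 2))

open MeasureTheory Topology FourierTransform

theorem tendsto_integral_mul_cos_cocompact {f : ℝ → ℝ} (hf : Integrable f) :
    Tendsto (fun w => ∫ x, f x * cos (w * x)) (cocompact ℝ) (𝓝 0) := by
  have hfourier : ∀ w, ∫ x, f x * cos (w * x)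
      = (∫ v, 𝐞 (-(v * (w * (2 * π)⁻¹))) • (f v : ℂ)).re := by
    intro w
    have hint : Integrable (fun v => 𝐞 (-(v * (w * (2 * π)⁻¹))) • (f v : ℂ)) :=
      (Real.fourierIntegral_convergent_iff' (ContinuousLinearMap.mul ℝ ℝ) _).2 hf.ofReal
    rw [← RCLike.re_to_complex, ← integral_re hint]
    congr 1 with v
    rw [Circle.smul_def, Real.fourierChar_apply, smul_eq_mul, RCLike.re_to_complex,
      Complex.re_mul_ofReal, Complex.exp_ofReal_mul_I_re, ← cos_neg]
    field_simp
  simp_rw [hfourier]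
  have h := (Complex.continuous_re.tendsto 0).comp ((Real.tendsto_integral_exp_smul_cocompact
    (fun v => (f v : ℂ))).comp (tendsto_cocompact_mul_right₀ (inv_ne_zero two_pi_pos.ne')))
  simpa only [Function.comp_def, Complex.zero_re] using h

theorem tendsto_intervalIntegral_mul_cos_cocompact {f : ℝ → ℝ} {a b : ℝ}
    (hf : IntervalIntegrable f volume a b) :
    Tendsto (fun w => ∫ x in a..b, f x * cos (w * x)) (cocompact ℝ) (𝓝 0) := by
  have hIoc : ∀ {s t : ℝ}, IntegrableOn f (Ioc s t) →
      Tendsto (fun w => ∫ x in Ioc s t, f x * cos (w * x)) (cocompact ℝ) (𝓝 0) := by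
    intro s t hst
    simp_rw [← MeasureTheory.integral_indicator measurableSet_Ioc, indicator_mul_left]
    exact tendsto_integral_mul_cos_cocompact ((integrable_indicator_iff measurableSet_Ioc).2 hst)
  simpa [intervalIntegral] using (hIoc hf.1).sub (hIoc hf.2)

theorem tendsto_intervalIntegral_mul_sin_sq_cocompact {f : ℝ → ℝ} {a b : ℝ}
    (hf : IntervalIntegrable f volume a b) :
    Tendsto (fun w => ∫ x in a..b, f x * sin (w * x) ^ 2) (cocompact ℝ)
      (𝓝 ((1 / 2) * ∫ x in a..b, f x)) := by
  have hsplit : ∀ w, ∫ x in a..b, f x * sin (w * x) ^ 2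
      = (1 / 2) * (∫ x in a..b, f x) - (1 / 2) * ∫ x in a..b, f x * cos ((2 * w) * x) := by
    intro w
    have hcos : IntervalIntegrable (fun x => f x * cos ((2 * w) * x)) volume a b :=
      hf.mul_continuousOn (by fun_prop)
    simp_rw [← intervalIntegral.integral_const_mul,
      ← integral_sub (hf.const_mul _) (hcos.const_mul _), sin_sq_eq_half_sub]
    congr 1 with x
    ring_nf
  simp_rw [hsplit]
  simpa using tendsto_const_nhds.sub
    (((tendsto_intervalIntegral_mul_cos_cocompact hf).comp
      (tendsto_cocompact_mul_left₀ two_ne_zero)).const_mul (1 / 2 : ℝ))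

noncomputable def triIntegrand (x : ℝ) : ℝ :=
  1 / (sin x * √(4 - cos x ^ 2)) - 1 / (√3 * x)

lemma sqrt_four_sub_sq_add_sqrt_three_mul_pos {c : ℝ} (hc : -1 < c) :
    0 < √(4 - c ^ 2) + √3 * c := by
  rcases le_or_gt c 0 with hc0 | hc0
  · have hsqrt : √3 ≤ √(4 - c ^ 2) := sqrt_le_sqrt (by nlinarith)
    nlinarith [sqrt_pos.2 (show (0 : ℝ) < 3 by norm_num)]
  · positivity

lemma four_sub_cos_sq_pos (x : ℝ) : 0 < 4 - cos x ^ 2 := by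
  nlinarith [cos_sq_le_one x]

lemma sqrt_four_sub_cos_sq_pos (x : ℝ) : 0 < √(4 - cos x ^ 2) :=
  sqrt_pos.2 (four_sub_cos_sq_pos x)

lemma neg_one_lt_cos_of_mem_Ico {x : ℝ} (hx : x ∈ Ico 0 π) : -1 < cos x :=
  cos_pi ▸ cos_lt_cos_of_nonneg_of_le_pi hx.1 le_rfl hx.2

lemma artanh_sqrt_three_mul_cos_div {x : ℝ} (hx : 0 < sin x) :
    _root_.artanh (√3 * cos x / √(4 - cos x ^ 2))
      = log ((√(4 - cos x ^ 2) + √3 * cos x) / (2 * sin x)) := by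
  have hc : cos x ^ 2 < 1 := by nlinarith [sin_sq_add_cos_sq x]
  have hplus := sqrt_four_sub_sq_add_sqrt_three_mul_pos (c := cos x) (by nlinarith)
  have hminus := sqrt_four_sub_sq_add_sqrt_three_mul_pos (c := -cos x) (by nlinarith)
  rw [neg_sq] at hminus
  have hr : √(4 - cos x ^ 2) ^ 2 = 4 - cos x ^ 2 := sq_sqrt (by nlinarith)
  have ht : √3 ^ 2 = 3 := sq_sqrt (by norm_num)
  -- `(r + √3 c) (r - √3 c) = r² - 3 c² = 4 sin² x`, where `r = √(4 - c²)`
  have hratio : (1 + √3 * cos x / √(4 - cos x ^ 2)) / (1 - √3 * cos x / √(4 - cos x ^ 2))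
      = ((√(4 - cos x ^ 2) + √3 * cos x) / (2 * sin x)) ^ 2 := by
    have hr0 := (sqrt_four_sub_cos_sq_pos x).ne'
    rw [one_add_div hr0, one_sub_div hr0, div_div_div_cancel_right₀ hr0,
      div_eq_iff (by linarith)]
    field_simp
    linear_combination (√(4 - cos x ^ 2) + √3 * cos x) *
      (4 * sin_sq_add_cos_sq x - hr + cos x ^ 2 * ht)
  rw [_root_.artanh, hratio, log_pow]
  push_cast
  ring

lemma hasDerivAt_triAntideriv {x : ℝ} (hx : x ∈ Ioo 0 π) :
    HasDerivAt triAntideriv (triIntegrand x) x := by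
  have hs : 0 < sin x := sin_pos_of_pos_of_lt_pi hx.1 hx.2
  have hA := sqrt_four_sub_sq_add_sqrt_three_mul_pos
    (neg_one_lt_cos_of_mem_Ico (Ioo_subset_Ico_self hx))
  have hlocal : triAntideriv =ᶠ[𝓝 x] fun y => -log y / √3
      - 1 / √3 * (log (√(4 - cos y ^ 2) + √3 * cos y) - log (2 * sin y)) := by
    filter_upwards [isOpen_Ioo.mem_nhds hx] with y hy
    have hsy : 0 < sin y := sin_pos_of_pos_of_lt_pi hy.1 hy.2
    rw [triAntideriv, artanh_sqrt_three_mul_cos_div hsy, log_div _ (by positivity)]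
    exact (sqrt_four_sub_sq_add_sqrt_three_mul_pos
      (neg_one_lt_cos_of_mem_Ico (Ioo_subset_Ico_self hy))).ne'
  have hsqrt : HasDerivAt (fun y => √(4 - cos y ^ 2)) (cos x * sin x / √(4 - cos x ^ 2)) x := by
    convert ((hasDerivAt_cos x).fun_pow 2 |>.const_sub 4).sqrt (four_sub_cos_sq_pos x).ne'
      using 1
    field_simp
    ring
  have hlog := ((hasDerivAt_log hx.1.ne').neg.div_const √3).sub
    ((((hsqrt.add ((hasDerivAt_cos x).const_mul √3)).log hA.ne').sub
      (((hasDerivAt_sin x).const_mul 2).log (by positivity))).const_mul (1 / √3))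
  refine (hlog.congr_of_eventuallyEq hlocal).congr_deriv ?_
  have hr : √(4 - cos x ^ 2) ^ 2 = 4 - cos x ^ 2 := sq_sqrt (four_sub_cos_sq_pos x).le
  have ht : √3 ^ 2 = 3 := sq_sqrt (by norm_num)
  have hr0 := (sqrt_four_sub_cos_sq_pos x).ne'
  have hA0 := hA.ne'
  have hx0 := hx.1.ne'
  rw [triIntegrand, Pi.add_apply]
  field_simp
  linear_combination -x * (cos x * sin_sq_add_cos_sq x - cos x * hr
    - √3 * √(4 - cos x ^ 2) * sin_sq_add_cos_sq x + cos x * ht)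

/-- Continuous extension of `triAntideriv` from `(0, π)` to `[0, π)`: `sinc` absorbs the
singularity of `-log x - artanh (…)` at `0`. -/
noncomputable def triAntiderivExt (x : ℝ) : ℝ :=
  -log ((√(4 - cos x ^ 2) + √3 * cos x) / (2 * sinc x)) / √3

lemma eqOn_triAntideriv_triAntiderivExt : EqOn triAntideriv triAntiderivExt (Ioo 0 π) := by
  intro x hx
  have hs : 0 < sin x := sin_pos_of_pos_of_lt_pi hx.1 hx.2
  have hA := sqrt_four_sub_sq_add_sqrt_three_mul_pos
    (neg_one_lt_cos_of_mem_Ico (Ioo_subset_Ico_self hx))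
  rw [triAntideriv, triAntiderivExt, artanh_sqrt_three_mul_cos_div hs, sinc_of_ne_zero hx.1.ne',
    show (√(4 - cos x ^ 2) + √3 * cos x) / (2 * (sin x / x))
      = x * ((√(4 - cos x ^ 2) + √3 * cos x) / (2 * sin x)) by field_simp,
    log_mul hx.1.ne' (by positivity)]
  ring

lemma continuousAt_triAntiderivExt {x : ℝ} (hx : x ∈ Ico 0 π) :
    ContinuousAt triAntiderivExt x := by
  have hsinc : sinc x ≠ 0 := by
    rcases hx.1.eq_or_lt with rfl | hx0
    · simp
    · rw [sinc_of_ne_zero hx0.ne']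
      exact (div_pos (sin_pos_of_pos_of_lt_pi hx0 hx.2) hx0).ne'
  have hA := sqrt_four_sub_sq_add_sqrt_three_mul_pos (neg_one_lt_cos_of_mem_Ico hx)
  unfold triAntiderivExt
  have : ContinuousAt (fun y => (√(4 - cos y ^ 2) + √3 * cos y) / (2 * sinc y)) x :=
    ContinuousAt.div (by fun_prop) (continuous_sinc.continuousAt.const_mul 2) (by simpa using hsinc)
  exact ((this.log (div_ne_zero hA.ne' (by simpa using hsinc))).neg).div_const _

lemma triAntiderivExt_zero : triAntiderivExt 0 = -log √3 / √3 := by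
  norm_num [triAntiderivExt]

lemma tendsto_triAntideriv_zero :
    Tendsto triAntideriv (𝓝[>] 0) (𝓝 (-log √3 / √3)) := by
  rw [← triAntiderivExt_zero]
  refine ((continuousAt_triAntiderivExt ⟨le_rfl, pi_pos⟩).tendsto.mono_left
    nhdsWithin_le_nhds).congr' ?_
  filter_upwards [Ioo_mem_nhdsGT pi_pos] with x hx
  exact (eqOn_triAntideriv_triAntiderivExt hx).symm

lemma triAntideriv_pi_div_two : triAntideriv (π / 2) = -log (π / 2) / √3 := by
  norm_num [triAntideriv, _root_.artanh]

lemma abs_sqrt_three_mul_sub_sin_mul_sqrt_le {x : ℝ} (hx : 0 ≤ x) (hs : 0 ≤ sin x) :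
    |√3 * x - sin x * √(4 - cos x ^ 2)| ≤ x ^ 3 := by
  have ht : √3 ≤ 2 := by rw [sqrt_le_left zero_le_two]; norm_num
  have hsx : sin x ≤ x := sin_le hx
  have hlow : √3 ≤ √(4 - cos x ^ 2) := sqrt_le_sqrt (by nlinarith [cos_sq_le_one x])
  have hup : √(4 - cos x ^ 2) ≤ √3 + sin x ^ 2 := by
    have h1 : 1 ≤ √3 := one_le_sqrt.2 (by norm_num)
    rw [sqrt_le_left (by positivity)]
    nlinarith [sin_sq_add_cos_sq x, sq_sqrt (show (0 : ℝ) ≤ 3 by norm_num),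
      mul_le_mul_of_nonneg_right h1 (sq_nonneg (sin x)), sq_nonneg (sin x ^ 2)]
  have hsin_cube : sin x ^ 3 ≤ x ^ 3 := pow_le_pow_left₀ hs hsx 3
  -- both `√3 (x - sin x)` and `sin x (r - √3)` lie in `[0, x³]`
  rw [show √3 * x - sin x * √(4 - cos x ^ 2)
      = √3 * (x - sin x) - sin x * (√(4 - cos x ^ 2) - √3) by ring]
  refine abs_sub_le_of_nonneg_of_le (by nlinarith [sqrt_nonneg 3]) ?_
    (mul_nonneg hs (by linarith)) ?_
  · nlinarith [sin_ge_sub_cube hx, pow_nonneg hx 3]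
  · nlinarith [mul_le_mul_of_nonneg_left hup hs]

lemma abs_triIntegrand_le {x : ℝ} (hx : x ∈ Ioc 0 (π / 2)) : |triIntegrand x| ≤ x := by
  have hx0 : 0 < x := hx.1
  have hs : 0 < sin x := sin_pos_of_pos_of_lt_pi hx.1 (by linarith [hx.2, pi_pos])
  have hr := sqrt_four_sub_cos_sq_pos x
  have hjordan : 2 / π * x ≤ sin x := mul_le_sin hx.1.le hx.2
  have hlow : √3 ≤ √(4 - cos x ^ 2) := sqrt_le_sqrt (by nlinarith [cos_sq_le_one x])
  have hden : 6 / π * x ^ 2 ≤ sin x * √(4 - cos x ^ 2) * (√3 * x) := by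
    calc 6 / π * x ^ 2 = (2 / π * x) * √3 * (√3 * x) := by
          rw [mul_assoc (2 / π * x), ← mul_assoc √3, mul_self_sqrt zero_le_three]; ring
      _ ≤ sin x * √(4 - cos x ^ 2) * (√3 * x) := by gcongr
  have hnum := abs_sqrt_three_mul_sub_sin_mul_sqrt_le hx.1.le hs.le
  have hpos : 0 < sin x * √(4 - cos x ^ 2) * (√3 * x) := by positivity
  have hform : triIntegrand x
      = (√3 * x - sin x * √(4 - cos x ^ 2)) / (sin x * √(4 - cos x ^ 2) * (√3 * x)) := by
    rw [triIntegrand]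
    field_simp
  rw [hform, abs_div, abs_of_pos hpos, div_le_iff₀ hpos]
  calc |√3 * x - sin x * √(4 - cos x ^ 2)| ≤ x ^ 3 := hnum
    _ ≤ x * (6 / π * x ^ 2) := by
        rw [← sub_nonneg, show x * (6 / π * x ^ 2) - x ^ 3 = x ^ 3 * (6 / π - 1) by ring]
        exact mul_nonneg (by positivity)
          (by rw [sub_nonneg, le_div_iff₀ pi_pos]; linarith [pi_lt_four])
    _ ≤ x * (sin x * √(4 - cos x ^ 2) * (√3 * x)) := by gcongr

lemma intervalIntegrable_triIntegrand : IntervalIntegrable triIntegrand volume 0 (π / 2) := by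
  refine continuous_id.intervalIntegrable 0 (π / 2) |>.mono_fun'
    (by unfold triIntegrand; fun_prop) ?_
  rw [uIoc_of_le (by positivity), EventuallyLE, ae_restrict_iff' measurableSet_Ioc]
  exact ae_of_all _ fun x hx => abs_triIntegrand_le hx

lemma integral_triIntegrand :
    ∫ x in (0 : ℝ)..π / 2, triIntegrand x = triAntideriv (π / 2) - -log √3 / √3 := by
  have hpi := pi_pos
  rw [eqOn_triAntideriv_triAntiderivExt ⟨by positivity, by linarith⟩, ← triAntiderivExt_zero]
  refine integral_eq_sub_of_hasDerivAt_of_le (by positivity)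
    (fun x hx => (continuousAt_triAntiderivExt ⟨hx.1, by linarith [hx.2]⟩).continuousWithinAt)
    (fun x hx => ?_) intervalIntegrable_triIntegrand
  have hx' : x ∈ Ioo 0 π := ⟨hx.1, by linarith [hx.2]⟩
  exact (hasDerivAt_triAntideriv hx').congr_of_eventuallyEq
    (eqOn_triAntideriv_triAntiderivExt.eventuallyEq_of_mem (isOpen_Ioo.mem_nhds hx')).symm

theorem limit_integral_correction_term :
    Tendsto triAntideriv (nhdsWithin 0 (Set.Ioi 0))
      (nhds (-Real.log (Real.sqrt 3) / Real.sqrt 3)) ∧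
    triAntideriv (π / 2) = -Real.log (π / 2) / Real.sqrt 3 ∧
    (1 / 2) * (triAntideriv (π / 2) - (-Real.log (Real.sqrt 3) / Real.sqrt 3))
      = (1 / (2 * Real.sqrt 3)) * Real.log (2 * Real.sqrt 3 / π) ∧
    Tendsto (fun n : ℕ => ∫ x in (0:ℝ)..(π / 2),
        (1 / (Real.sin x * Real.sqrt (4 - Real.cos x ^ 2)) - 1 / (Real.sqrt 3 * x))
          * Real.sin (n * x) ^ 2)
      atTop (nhds ((1 / (2 * Real.sqrt 3)) * Real.log (2 * Real.sqrt 3 / π))) := by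
  have hpi := pi_pos
  have hvalue :
      (1 / 2) * (triAntideriv (π / 2) - -log √3 / √3) = 1 / (2 * √3) * log (2 * √3 / π) := by
    rw [triAntideriv_pi_div_two, show 2 * √3 / π = √3 / (π / 2) by field_simp,
      log_div (x := √3) (by positivity) (by positivity)]
    field_simp
    ring
  refine ⟨tendsto_triAntideriv_zero, triAntideriv_pi_div_two, hvalue, ?_⟩
  rw [← hvalue, ← integral_triIntegrand]
  exact (tendsto_intervalIntegral_mul_sin_sq_cocompact intervalIntegrable_triIntegrand).comp
    (tendsto_natCast_atTop_atTop.mono_right atTop_le_cocompact)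
end

section
/- Let c_{i,j} be defined by the square-lattice Green's-function integral. Then for all integers j > i ≥ 1, c_{i,j} = 4·c_{i,j−1} − c_{i,j−2} − c_{i−1,j−1} − c_{i+1,j−1}. -/
/-!
With `u = (τ - i)/(τ + i)` and `v = (τ - 1)/(τ + 1)` the integrand of `c_{i,j}` is
`(1 - u^(i-j) v^(i+j)) / τ`. Multiplying the identity `(u² + 1)(v² + 1) = 4uv` by
`u^(i-j) v^(i+j-2)` gives the recurrence pointwise in `τ`, the constant terms balancing because
`4 - 1 - 1 - 1 = 1`. It passes to the integrals since every integrand involved is integrable on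
`(0, ∞)`: as `|u| = 1` and `|v| ≤ 1`, the factor `1 - u^a v^b` is `O(1/τ)` at infinity, where
`u, v → 1`, and, because `a + b` is even, `O(τ)` at `0`, where `u, v → -1`.
-/

open Real MeasureTheory

/-- The square-lattice Green's-function coefficient
`c_{i,j} = -(1/π) ∫_0^∞ (1/τ)(1 - ((τ-i)/(τ+i))^{i-j}((τ-1)/(τ+1))^{i+j}) dτ`,
equal to the entry `C_{O,(i,j)}` of the matrix `C` of the infinite square lattice. -/
noncomputable def squareGreen (i j : ℕ) : ℂ :=
  -(1 / (π : ℂ)) * ∫ τ in Set.Ioi (0:ℝ),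
    (1 / (τ : ℂ)) * (1 - (((τ : ℂ) - Complex.I) / ((τ : ℂ) + Complex.I)) ^ ((i : ℤ) - (j : ℤ))
      * (((τ : ℂ) - 1) / ((τ : ℂ) + 1)) ^ ((i : ℤ) + (j : ℤ)))

theorem norm_one_sub_pow_le {R : Type*} [SeminormedRing R] [NormOneClass R] {w : R}
    (hw : ‖w‖ ≤ 1) (n : ℕ) : ‖1 - w ^ n‖ ≤ n * ‖1 - w‖ := by
  induction n with
  | zero => simp
  | succ n ih =>
    calc ‖1 - w ^ (n + 1)‖ = ‖(1 - w ^ n) + w ^ n * (1 - w)‖ := by noncomm_ring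
      _ ≤ n * ‖1 - w‖ + 1 * ‖1 - w‖ := by
        refine (norm_add_le _ _).trans (add_le_add ih ?_)
        exact (norm_mul_le _ _).trans (mul_le_mul_of_nonneg_right
          ((norm_pow_le _ n).trans (pow_le_one₀ (norm_nonneg _) hw)) (norm_nonneg _))
      _ = (n + 1 : ℕ) * ‖1 - w‖ := by push_cast; ring

theorem norm_one_sub_zpow_le {K : Type*} [NormedDivisionRing K] {w : K} (hw : ‖w‖ = 1)
    (n : ℤ) : ‖1 - w ^ n‖ ≤ |(n : ℝ)| * ‖1 - w‖ := by
  obtain ⟨m, rfl | rfl⟩ := n.eq_nat_or_neg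
  · simpa using norm_one_sub_pow_le hw.le m
  · have hwm : w ^ m ≠ 0 := pow_ne_zero _ (norm_ne_zero_iff.mp (by simp [hw]))
    have : 1 - w ^ (-(m : ℤ)) = -(1 - w ^ m) * (w ^ m)⁻¹ := by
      rw [zpow_neg, zpow_natCast, neg_sub, sub_mul, mul_inv_cancel₀ hwm, one_mul]
    rw [this, norm_mul, norm_neg, norm_inv, norm_pow, hw, one_pow, inv_one, mul_one]
    simpa using norm_one_sub_pow_le hw.le m

theorem norm_one_sub_zpow_mul_pow_le {K : Type*} [NormedDivisionRing K] {u v : K}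
    (hu : ‖u‖ = 1) (hv : ‖v‖ ≤ 1) (a : ℤ) (b : ℕ) :
    ‖1 - u ^ a * v ^ b‖ ≤ |(a : ℝ)| * ‖1 - u‖ + b * ‖1 - v‖ :=
  calc ‖1 - u ^ a * v ^ b‖ = ‖(1 - u ^ a) + u ^ a * (1 - v ^ b)‖ := by noncomm_ring
    _ ≤ ‖1 - u ^ a‖ + ‖u ^ a * (1 - v ^ b)‖ := norm_add_le _ _
    _ = ‖1 - u ^ a‖ + ‖1 - v ^ b‖ := by rw [norm_mul, norm_zpow, hu, one_zpow, one_mul]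
    _ ≤ _ := add_le_add (norm_one_sub_zpow_le hu a) (norm_one_sub_pow_le hv b)

open Complex Set

namespace SquareGreen

noncomputable def u (τ : ℝ) : ℂ := (τ - I) / (τ + I)

noncomputable def v (τ : ℝ) : ℂ := (τ - 1) / (τ + 1)

theorem ofReal_add_I_ne_zero (τ : ℝ) : (τ : ℂ) + I ≠ 0 :=
  fun h => by simpa using congrArg im h

theorem one_le_norm_ofReal_add_I (τ : ℝ) : 1 ≤ ‖(τ : ℂ) + I‖ := by
  simpa using abs_im_le_norm ((τ : ℂ) + I)

theorem abs_le_norm_ofReal_add_I (τ : ℝ) : |τ| ≤ ‖(τ : ℂ) + I‖ := by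
  simpa using abs_re_le_norm ((τ : ℂ) + I)

theorem ofReal_add_one_ne_zero {τ : ℝ} (hτ : τ ≠ -1) : (τ : ℂ) + 1 ≠ 0 := by
  exact_mod_cast fun h : τ + 1 = 0 => hτ (eq_neg_of_add_eq_zero_left h)

theorem u_ne_zero (τ : ℝ) : u τ ≠ 0 := by
  refine div_ne_zero (fun h => ?_) (ofReal_add_I_ne_zero τ)
  simpa using congrArg im h

theorem norm_u (τ : ℝ) : ‖u τ‖ = 1 := by
  have : (τ : ℂ) - I = (starRingEnd ℂ) (τ + I) := by simp [sub_eq_add_neg]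
  rw [u, norm_div, this, norm_conj, div_self (norm_ne_zero_iff.mpr (ofReal_add_I_ne_zero τ))]

theorem norm_one_sub_u_le {τ : ℝ} (hτ : 0 < τ) : ‖1 - u τ‖ ≤ 2 / τ := by
  have : 1 - u τ = 2 * I / (τ + I) := by
    rw [u]; field_simp [ofReal_add_I_ne_zero τ]; ring
  rw [this, norm_div, norm_mul, norm_I, mul_one, RCLike.norm_ofNat]
  gcongr
  simpa [abs_of_pos hτ] using abs_le_norm_ofReal_add_I τ

theorem norm_one_add_u_le (τ : ℝ) : ‖1 + u τ‖ ≤ 2 * |τ| := by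
  have : 1 + u τ = 2 * τ / (τ + I) := by
    rw [u]; field_simp [ofReal_add_I_ne_zero τ]; ring
  rw [this, norm_div, norm_mul, norm_real, RCLike.norm_ofNat, norm_eq_abs]
  exact div_le_self (by positivity) (one_le_norm_ofReal_add_I τ)

theorem v_eq_ofReal (τ : ℝ) : v τ = ((τ - 1) / (τ + 1) : ℝ) := by
  simp [v]

theorem norm_v_le {τ : ℝ} (hτ : 0 ≤ τ) : ‖v τ‖ ≤ 1 := by
  rw [v_eq_ofReal, norm_real, norm_eq_abs, abs_div, div_le_one (by positivity),
    abs_of_nonneg (by linarith : 0 ≤ τ + 1)]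
  exact abs_le.mpr ⟨by linarith, by linarith⟩

theorem norm_one_sub_v_le {τ : ℝ} (hτ : 0 < τ) : ‖1 - v τ‖ ≤ 2 / τ := by
  have : 1 - (τ - 1) / (τ + 1) = 2 / (τ + 1) := by field_simp; ring
  rw [v_eq_ofReal, ← ofReal_one, ← ofReal_sub, norm_real, norm_eq_abs, this,
    abs_of_pos (by positivity)]
  gcongr; linarith

theorem norm_one_add_v_le {τ : ℝ} (hτ : 0 ≤ τ) : ‖1 + v τ‖ ≤ 2 * τ := by
  have : 1 + (τ - 1) / (τ + 1) = 2 * τ / (τ + 1) := by field_simp; ring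
  rw [v_eq_ofReal, ← ofReal_one, ← ofReal_add, norm_real, norm_eq_abs, this,
    abs_of_nonneg (by positivity)]
  exact div_le_self (by positivity) (by linarith)

theorem norm_one_sub_u_zpow_mul_v_pow_le_div {τ : ℝ} (hτ : 0 < τ) (a : ℤ) (b : ℕ) :
    ‖1 - u τ ^ a * v τ ^ b‖ ≤ 2 * (|(a : ℝ)| + b) / τ :=
  calc ‖1 - u τ ^ a * v τ ^ b‖ ≤ |(a : ℝ)| * ‖1 - u τ‖ + b * ‖1 - v τ‖ :=
        norm_one_sub_zpow_mul_pow_le (norm_u τ) (norm_v_le hτ.le) a b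
    _ ≤ |(a : ℝ)| * (2 / τ) + b * (2 / τ) := by
        gcongr
        exacts [norm_one_sub_u_le hτ, norm_one_sub_v_le hτ]
    _ = 2 * (|(a : ℝ)| + b) / τ := by ring

theorem norm_one_sub_u_zpow_mul_v_pow_le_mul_of_even {τ : ℝ} (hτ : 0 ≤ τ) {a : ℤ} {b : ℕ}
    (hab : Even (a + b)) : ‖1 - u τ ^ a * v τ ^ b‖ ≤ 2 * (|(a : ℝ)| + b) * τ := by
  have hneg : u τ ^ a * v τ ^ b = (-u τ) ^ a * (-v τ) ^ b := by
    rw [neg_eq_neg_one_mul, neg_eq_neg_one_mul (v τ), mul_zpow, mul_pow,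
      ← zpow_natCast (-1 : ℂ) b, mul_mul_mul_comm, ← zpow_add₀ (by norm_num),
      hab.neg_one_zpow, one_mul]
  calc ‖1 - u τ ^ a * v τ ^ b‖ ≤ |(a : ℝ)| * ‖1 - -u τ‖ + b * ‖1 - -v τ‖ := by
        rw [hneg]
        exact norm_one_sub_zpow_mul_pow_le (by rw [norm_neg, norm_u])
          (by rw [norm_neg]; exact norm_v_le hτ) a b
    _ ≤ |(a : ℝ)| * (2 * τ) + b * (2 * τ) := by
        simp only [sub_neg_eq_add]
        gcongr
        exacts [(norm_one_add_u_le τ).trans_eq (by rw [abs_of_nonneg hτ]), norm_one_add_v_le hτ]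
    _ = 2 * (|(a : ℝ)| + b) * τ := by ring

noncomputable def integrand (a : ℤ) (b : ℕ) (τ : ℝ) : ℂ :=
  1 / τ * (1 - u τ ^ a * v τ ^ b)

theorem norm_integrand_le {τ : ℝ} (hτ : 0 < τ) {a : ℤ} {b : ℕ} (hab : Even (a + b)) :
    ‖integrand a b τ‖ ≤ 4 * (|(a : ℝ)| + b) * (1 + τ ^ 2)⁻¹ := by
  rw [integrand, norm_mul, norm_div, norm_one, norm_real, norm_eq_abs, abs_of_pos hτ,
    le_mul_inv_iff₀ (by positivity)]
  rcases le_total τ 1 with hτ1 | hτ1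
  · calc 1 / τ * ‖1 - u τ ^ a * v τ ^ b‖ * (1 + τ ^ 2)
        ≤ 1 / τ * (2 * (|(a : ℝ)| + b) * τ) * 2 := by
          gcongr
          · exact norm_one_sub_u_zpow_mul_v_pow_le_mul_of_even hτ.le hab
          · nlinarith
      _ = 4 * (|(a : ℝ)| + b) := by field_simp; ring
  · calc 1 / τ * ‖1 - u τ ^ a * v τ ^ b‖ * (1 + τ ^ 2)
        ≤ 1 / τ * (2 * (|(a : ℝ)| + b) / τ) * (2 * τ ^ 2) := by
          gcongr
          · exact norm_one_sub_u_zpow_mul_v_pow_le_div hτ a b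
          · nlinarith
      _ = 4 * (|(a : ℝ)| + b) := by field_simp; ring

theorem continuousOn_integrand (a : ℤ) (b : ℕ) : ContinuousOn (integrand a b) (Ioi 0) := by
  have hu : Continuous u :=
    (by fun_prop : Continuous fun τ : ℝ => (τ : ℂ) - I).div (by fun_prop) ofReal_add_I_ne_zero
  have hv : ContinuousOn v (Ioi 0) :=
    (by fun_prop : Continuous fun τ : ℝ => (τ : ℂ) - 1).continuousOn.div (by fun_prop)
      fun τ (hτ : 0 < τ) => ofReal_add_one_ne_zero (by linarith)
  have hinv : ContinuousOn (fun τ : ℝ => 1 / (τ : ℂ)) (Ioi 0) :=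
    continuousOn_const.div (by fun_prop) fun τ (hτ : 0 < τ) => ofReal_ne_zero.mpr hτ.ne'
  exact hinv.mul (continuousOn_const.sub
    ((hu.continuousOn.zpow₀ a fun τ _ => Or.inl (u_ne_zero τ)).mul (hv.pow b)))

theorem integrableOn_integrand {a : ℤ} {b : ℕ} (hab : Even (a + b)) :
    IntegrableOn (integrand a b) (Ioi 0) := by
  refine Integrable.mono'
    ((integrable_inv_one_add_sq.const_mul (4 * (|(a : ℝ)| + b))).integrableOn)
    ((continuousOn_integrand a b).aestronglyMeasurable measurableSet_Ioi) ?_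
  exact (ae_restrict_iff' measurableSet_Ioi).mpr
    (ae_of_all _ fun τ hτ => norm_integrand_le hτ hab)

theorem u_sq_add_one_mul_v_sq_add_one {τ : ℝ} (hτ : τ ≠ -1) :
    (u τ ^ 2 + 1) * (v τ ^ 2 + 1) = 4 * u τ * v τ := by
  rw [u, v]
  field_simp [ofReal_add_I_ne_zero τ, ofReal_add_one_ne_zero hτ]
  linear_combination (8 * (τ : ℂ) ^ 2) * I_sq

theorem integrand_recurrence {τ : ℝ} (hτ : τ ≠ -1) (a : ℤ) (b : ℕ) :
    integrand a (b + 2) τ = 4 * integrand (a + 1) (b + 1) τ - integrand (a + 2) b τ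
      - integrand a b τ - integrand (a + 2) (b + 2) τ := by
  simp only [integrand, zpow_add₀ (u_ne_zero τ), zpow_one, zpow_two]
  linear_combination (-(1 / (τ : ℂ)) * u τ ^ a * v τ ^ b) * u_sq_add_one_mul_v_sq_add_one hτ

noncomputable def integral (a : ℤ) (b : ℕ) : ℂ := ∫ τ in Ioi 0, integrand a b τ

theorem integral_recurrence {a : ℤ} {b : ℕ} (hab : Even (a + b)) :
    integral a (b + 2) = 4 * integral (a + 1) (b + 1) - integral (a + 2) b
      - integral a b - integral (a + 2) (b + 2) := by
  obtain ⟨k, hk⟩ := hab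
  have h₁ := integrableOn_integrand (a := a + 1) (b := b + 1) ⟨k + 1, by push_cast; omega⟩
  have h₂ := integrableOn_integrand (a := a + 2) (b := b) ⟨k + 1, by omega⟩
  have h₃ := integrableOn_integrand (a := a) (b := b) ⟨k, hk⟩
  have h₄ := integrableOn_integrand (a := a + 2) (b := b + 2) ⟨k + 2, by push_cast; omega⟩
  unfold IntegrableOn at h₁ h₂ h₃ h₄
  rw [integral, setIntegral_congr_fun measurableSet_Ioi fun τ (hτ : 0 < τ) =>
    integrand_recurrence (by linarith) a b, integral_sub, integral_sub, integral_sub,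
    integral_const_mul]
  · rfl
  all_goals fun_prop

end SquareGreen

theorem squareGreen_eq_integral {i j : ℕ} {a : ℤ} {b : ℕ} (ha : (i : ℤ) - j = a)
    (hb : i + j = b) : squareGreen i j = -(1 / π) * SquareGreen.integral a b := by
  rw [squareGreen, ← ha, show (i : ℤ) + j = (b : ℤ) by omega]
  simp only [zpow_natCast]
  rfl

theorem squareGreen_interior_recurrence :
    ∀ i j : ℕ, 1 ≤ i → i < j →
      squareGreen i j =
        4 * squareGreen i (j - 1) - squareGreen i (j - 2)
          - squareGreen (i - 1) (j - 1) - squareGreen (i + 1) (j - 1) := by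
  intro i j hi hij
  obtain ⟨b, hb⟩ : ∃ b, i + j = b + 2 := ⟨i + j - 2, by omega⟩
  have hab : Even ((i : ℤ) - j + b) := ⟨i - 1, by omega⟩
  rw [squareGreen_eq_integral rfl hb,
    squareGreen_eq_integral (a := i - j + 1) (b := b + 1) (by omega) (by omega),
    squareGreen_eq_integral (a := i - j + 2) (b := b) (by omega) (by omega),
    squareGreen_eq_integral (a := i - j) (b := b) (by omega) (by omega),
    squareGreen_eq_integral (a := i - j + 2) (b := b + 2) (by omega) (by omega),
    SquareGreen.integral_recurrence hab]
  ring
end
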